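/- Let k be a field, n an odd positive integer, R = k[[x,y]]/(y²+xⁿ), and 1 ≤ j ≤ (n−1)/2. Let φⱼ be the 2×2 matrix with rows (0, −x^{n−j}) and (x^j, 0). Then φⱼ² = −xⁿ·id₂, the cokernel of y·id₂ − φⱼ is isomorphic to the ideal (x^j, y) of R, and the trace ideal of (x^j, y) equals (x^j, y). -/

import Mathlib

/-- The trace ideal of an `R`-module `M`: the sum of the images of all `R`-linear maps
`M → R`. -/
def traceIdeal (R : Type*) [CommRing R] (M : Type*) [AddCommGroup M] [Module R M] :
    Ideal R :=
  ⨆ f : M →ₗ[R] R, LinearMap.range f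

/-- The one-dimensional `A`-type singularity `R = k⟦x,y⟧/(y² + xⁿ)`. -/
noncomputable abbrev An1 (k : Type*) [Field k] (n : ℕ) : Type _ :=
  MvPowerSeries (Fin 2) k ⧸
    Ideal.span {(MvPowerSeries.X 1 : MvPowerSeries (Fin 2) k) ^ 2 + MvPowerSeries.X 0 ^ n}

/-- The image of `x` in `R = k⟦x,y⟧/(y² + xⁿ)`. -/
noncomputable def xAn (k : Type*) [Field k] (n : ℕ) : An1 k n :=
  Ideal.Quotient.mk _ (MvPowerSeries.X 0 : MvPowerSeries (Fin 2) k)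

/-- The image of `y` in `R = k⟦x,y⟧/(y² + xⁿ)`. -/
noncomputable def yAn (k : Type*) [Field k] (n : ℕ) : An1 k n :=
  Ideal.Quotient.mk _ (MvPowerSeries.X 1 : MvPowerSeries (Fin 2) k)

open MvPowerSeries Finsupp Finset

namespace MFAn

variable {k : Type*} [Field k]

/-- Monomial exponent `(a, b)` meaning `X^a Y^b`. -/
noncomputable def e (a b : ℕ) : Fin 2 →₀ ℕ := Finsupp.single 0 a + Finsupp.single 1 b

@[simp] lemma e_apply0 (a b : ℕ) : e a b 0 = a := by
  simp [e, Finsupp.single_apply]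

@[simp] lemma e_apply1 (a b : ℕ) : e a b 1 = b := by
  simp [e, Finsupp.single_apply]

lemma eq_e (d : Fin 2 →₀ ℕ) : d = e (d 0) (d 1) := by
  ext i
  fin_cases i
  · simp
  · simp

lemma e_sub1 (a b c : ℕ) : e a b - Finsupp.single 1 c = e a (b - c) := by
  ext i
  fin_cases i
  · simp [Finsupp.tsub_apply, Finsupp.single_apply]
  · simp [Finsupp.tsub_apply, Finsupp.single_apply]

lemma e_sub0 (a b c : ℕ) : e a b - Finsupp.single 0 c = e (a - c) b := by
  ext i
  fin_cases i
  · simp [Finsupp.tsub_apply, Finsupp.single_apply]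
  · simp [Finsupp.tsub_apply, Finsupp.single_apply]

lemma single1_le_e (a b c : ℕ) : Finsupp.single 1 c ≤ e a b ↔ c ≤ b := by
  rw [Finsupp.single_le_iff, e_apply1]

lemma single0_le_e (a b c : ℕ) : Finsupp.single 0 c ≤ e a b ↔ c ≤ a := by
  rw [Finsupp.single_le_iff, e_apply0]

/-- A power series involving only the variable `X 0`. -/
def Xonly (f : MvPowerSeries (Fin 2) k) : Prop :=
  ∀ d : Fin 2 →₀ ℕ, d 1 ≠ 0 → MvPowerSeries.coeff d f = 0

lemma Xonly.neg {f : MvPowerSeries (Fin 2) k} (hf : Xonly f) : Xonly (-f) := fun d hd => by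
  rw [map_neg, hf d hd, neg_zero]

lemma Xonly.add {f g : MvPowerSeries (Fin 2) k} (hf : Xonly f) (hg : Xonly g) :
    Xonly (f + g) := fun d hd => by
  rw [map_add, hf d hd, hg d hd, add_zero]

lemma Xonly.sub {f g : MvPowerSeries (Fin 2) k} (hf : Xonly f) (hg : Xonly g) :
    Xonly (f - g) := by
  rw [sub_eq_add_neg]; exact hf.add hg.neg

lemma Xonly.mul {f g : MvPowerSeries (Fin 2) k} (hf : Xonly f) (hg : Xonly g) :
    Xonly (f * g) := by
  classical
  intro d hd
  rw [MvPowerSeries.coeff_mul]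
  refine Finset.sum_eq_zero ?_
  rintro ⟨p, q⟩ hpq
  rw [HasAntidiagonal.mem_antidiagonal] at hpq
  have hd' : p 1 + q 1 = d 1 := by rw [← hpq]; rfl
  by_cases hp : p 1 = 0
  · have hq : q 1 ≠ 0 := by omega
    simp [hg q hq]
  · simp [hf p hp]

lemma Xonly_X0_pow (m : ℕ) : Xonly ((MvPowerSeries.X 0 : MvPowerSeries (Fin 2) k) ^ m) := by
  intro d hd
  classical
  rw [MvPowerSeries.coeff_X_pow, if_neg]
  intro h
  apply hd
  rw [h, Finsupp.single_apply]
  simp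



variable (n : ℕ)

/-- `F = Y² + Xⁿ`. -/
noncomputable def FF : MvPowerSeries (Fin 2) k :=
  (MvPowerSeries.X 1) ^ 2 + (MvPowerSeries.X 0) ^ n

lemma coeff_mul_FF (h : MvPowerSeries (Fin 2) k) (d : Fin 2 →₀ ℕ) :
    MvPowerSeries.coeff d (h * FF n) =
      (if Finsupp.single 1 2 ≤ d then MvPowerSeries.coeff (d - Finsupp.single 1 2) h else 0)
      + (if Finsupp.single 0 n ≤ d then MvPowerSeries.coeff (d - Finsupp.single 0 n) h
          else 0) := by
  rw [FF, mul_add, map_add, MvPowerSeries.X_pow_eq, MvPowerSeries.X_pow_eq,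
    MvPowerSeries.coeff_mul_monomial, MvPowerSeries.coeff_mul_monomial]
  split_ifs <;> simp

/-- The coefficients of the quotient upon division of `f` by `F`. -/
noncomputable def Hc (f : MvPowerSeries (Fin 2) k) (a b : ℕ) : k :=
  ∑ i ∈ Finset.range (a / n + 1),
    (-1 : k) ^ i * MvPowerSeries.coeff (e (a - n * i) (b + 2 + 2 * i)) f

lemma Hc_telescope (hn : 0 < n) (f : MvPowerSeries (Fin 2) k) (a b : ℕ) :
    Hc n f a b + (if n ≤ a then Hc n f (a - n) (b + 2) else 0)
      = MvPowerSeries.coeff (e a (b + 2)) f := by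
  by_cases hna : n ≤ a
  · rw [if_pos hna]
    have ha : a / n = (a - n) / n + 1 := Nat.div_eq_sub_div hn hna
    rw [Hc, ha, Finset.sum_range_succ']
    have hmain : ∑ i ∈ Finset.range ((a - n) / n + 1),
        (-1 : k) ^ (i + 1) *
          MvPowerSeries.coeff (e (a - n * (i + 1)) (b + 2 + 2 * (i + 1))) f
        = - Hc n f (a - n) (b + 2) := by
      rw [Hc, ← Finset.sum_neg_distrib]
      refine Finset.sum_congr rfl ?_
      intro i _
      rw [show a - n * (i + 1) = a - n - n * i from by
          rw [Nat.mul_succ, Nat.sub_sub, Nat.add_comm],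
        show b + 2 + 2 * (i + 1) = b + 2 + 2 + 2 * i from by ring, pow_succ]
      ring
    rw [hmain]
    simp
  · rw [if_neg hna]
    have : a / n = 0 := Nat.div_eq_of_lt (lt_of_not_ge hna)
    rw [Hc, this]
    simp

lemma exists_rep (hn : 0 < n) (f : MvPowerSeries (Fin 2) k) :
    ∃ P Q h : MvPowerSeries (Fin 2) k, Xonly P ∧ Xonly Q ∧
      f = h * FF n + P + Q * MvPowerSeries.X 1 := by
  classical
  set h : MvPowerSeries (Fin 2) k := fun d => Hc n f (d 0) (d 1) with hh
  set P : MvPowerSeries (Fin 2) k := fun d =>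
    if d 1 = 0 then MvPowerSeries.coeff (e (d 0) 0) f -
      (if n ≤ d 0 then Hc n f (d 0 - n) 0 else 0) else 0 with hP
  set Q : MvPowerSeries (Fin 2) k := fun d =>
    if d 1 = 0 then MvPowerSeries.coeff (e (d 0) 1) f -
      (if n ≤ d 0 then Hc n f (d 0 - n) 1 else 0) else 0 with hQ
  have hcoeffh : ∀ d, MvPowerSeries.coeff d h = Hc n f (d 0) (d 1) := fun d => rfl
  have hcoeffP : ∀ d, MvPowerSeries.coeff d P =
      if d 1 = 0 then MvPowerSeries.coeff (e (d 0) 0) f -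
        (if n ≤ d 0 then Hc n f (d 0 - n) 0 else 0) else 0 := fun d => rfl
  have hcoeffQ : ∀ d, MvPowerSeries.coeff d Q =
      if d 1 = 0 then MvPowerSeries.coeff (e (d 0) 1) f -
        (if n ≤ d 0 then Hc n f (d 0 - n) 1 else 0) else 0 := fun d => rfl
  refine ⟨P, Q, h, ?_, ?_, ?_⟩
  · intro d hd; rw [hcoeffP, if_neg hd]
  · intro d hd; rw [hcoeffQ, if_neg hd]
  · have main : ∀ a b : ℕ, MvPowerSeries.coeff (e a b) (h * FF n + P + Q * MvPowerSeries.X 1)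
        = MvPowerSeries.coeff (e a b) f := by
      intro a b
      have hY : (MvPowerSeries.X 1 : MvPowerSeries (Fin 2) k)
          = MvPowerSeries.monomial (Finsupp.single 1 1) 1 := by
        rw [← MvPowerSeries.X_pow_eq, pow_one]
      rw [map_add, map_add, coeff_mul_FF, hY, MvPowerSeries.coeff_mul_monomial]
      simp only [single1_le_e, single0_le_e, e_sub1, e_sub0, hcoeffh, hcoeffP, hcoeffQ,
        e_apply0, e_apply1, mul_one]
      match b with
      | 0 =>
          rw [if_neg (show ¬(2 ≤ 0) by omega), if_neg (show ¬(1 ≤ 0) by omega),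
            if_pos rfl]
          split_ifs <;> ring
      | 1 =>
          rw [if_neg (show ¬(2 ≤ 1) by omega), if_neg (show (1 : ℕ) = 0 → False by omega),
            if_pos (show 1 ≤ 1 by omega), show (1 : ℕ) - 1 = 0 from rfl, if_pos rfl]
          split_ifs <;> ring
      | (b + 2) =>
          rw [if_pos (show 2 ≤ b + 2 by omega), if_neg (show b + 2 = 0 → False by omega),
            if_pos (show 1 ≤ b + 2 by omega), show b + 2 - 1 = b + 1 from by omega,
            if_neg (show b + 1 = 0 → False by omega), show b + 2 - 2 = b from by omega,
            add_zero, add_zero]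
          exact Hc_telescope n hn f a b
    exact (MvPowerSeries.ext fun d => by
      have := main (d 0) (d 1); rwa [← eq_e d] at this).symm

lemma key_div (hn : 0 < n) {P Q h : MvPowerSeries (Fin 2) k}
    (hP : Xonly P) (hQ : Xonly Q)
    (heq : P + Q * MvPowerSeries.X 1 = h * FF n) : P = 0 ∧ Q = 0 := by
  classical
  have hY : (MvPowerSeries.X 1 : MvPowerSeries (Fin 2) k)
      = MvPowerSeries.monomial (Finsupp.single 1 1) 1 := by
    rw [← MvPowerSeries.X_pow_eq, pow_one]
  have hcoefQY : ∀ d : Fin 2 →₀ ℕ, d 1 ≠ 1 →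
      MvPowerSeries.coeff d (Q * MvPowerSeries.X 1) = 0 := by
    intro d hd
    rw [hY, MvPowerSeries.coeff_mul_monomial]
    split_ifs with hle
    · rw [mul_one]
      refine hQ _ ?_
      rw [Finsupp.tsub_apply, Finsupp.single_apply, if_pos rfl]
      have : 1 ≤ d 1 := by rw [Finsupp.single_le_iff] at hle; exact hle
      omega
    · rfl
  have hzero : ∀ a b : ℕ, MvPowerSeries.coeff (e a b) h = 0 := by
    intro a
    induction a using Nat.strong_induction_on with
    | _ a IH =>
      intro b
      have h1 : MvPowerSeries.coeff (e a (b + 2)) (P + Q * MvPowerSeries.X 1) = 0 := by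
        rw [map_add, hP _ (by rw [e_apply1]; omega), hcoefQY _ (by rw [e_apply1]; omega),
          add_zero]
      rw [heq, coeff_mul_FF, if_pos (by rw [single1_le_e]; omega), e_sub1,
        show b + 2 - 2 = b from by omega] at h1
      by_cases hna : n ≤ a
      · rw [if_pos (by rw [single0_le_e]; exact hna), e_sub0,
          IH (a - n) (by omega) (b + 2), add_zero] at h1
        exact h1
      · rw [if_neg (by rw [single0_le_e]; exact hna), add_zero] at h1
        exact h1
  have hh : h = 0 := by
    refine MvPowerSeries.ext fun d => ?_
    have := hzero (d 0) (d 1)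
    rw [← eq_e d] at this
    simpa using this
  rw [hh, zero_mul] at heq
  have hPzero : P = 0 := by
    refine MvPowerSeries.ext fun d => ?_
    rw [map_zero]
    by_cases hd : d 1 = 0
    · have := congrArg (MvPowerSeries.coeff d) heq
      rw [map_add, hcoefQY d (by omega), add_zero, map_zero] at this
      exact this
    · exact hP d hd
  refine ⟨hPzero, ?_⟩
  rw [hPzero, zero_add] at heq
  have hXne : (MvPowerSeries.X 1 : MvPowerSeries (Fin 2) k) ≠ 0 := by
    intro hx
    have := congrArg (MvPowerSeries.coeff (Finsupp.single 1 1)) hx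
    rw [hY, MvPowerSeries.coeff_monomial_same, map_zero] at this
    exact one_ne_zero this
  exact (mul_eq_zero.mp heq).resolve_right hXne



/-- Shorthand: the trace-ideal statement's base ring quotient map. -/
noncomputable def piAn (k : Type*) [Field k] (n : ℕ) :
    MvPowerSeries (Fin 2) k →+* An1 k n :=
  Ideal.Quotient.mk (Ideal.span
    {(MvPowerSeries.X 1 : MvPowerSeries (Fin 2) k) ^ 2 + MvPowerSeries.X 0 ^ n})

section Ring

variable (k : Type*) [Field k] (n : ℕ)

lemma xAn_eq : xAn k n = piAn k n (MvPowerSeries.X 0) := rfl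

lemma yAn_eq : yAn k n = piAn k n (MvPowerSeries.X 1) := rfl

lemma piAn_FF : piAn k n (FF n) = 0 := by
  rw [piAn, Ideal.Quotient.eq_zero_iff_mem]
  exact Ideal.subset_span rfl

lemma yAn_sq : yAn k n ^ 2 = -(xAn k n ^ n) := by
  have h : yAn k n ^ 2 + xAn k n ^ n = piAn k n (FF n) := by
    rw [FF, map_add, map_pow, map_pow, xAn_eq, yAn_eq]
  rw [piAn_FF] at h
  linear_combination h

lemma surj_piAn (r : An1 k n) : ∃ f, piAn k n f = r :=
  Ideal.Quotient.mk_surjective r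

lemma rep_R (hn : 0 < n) (r : An1 k n) :
    ∃ P Q : MvPowerSeries (Fin 2) k, Xonly P ∧ Xonly Q ∧
      r = piAn k n P + piAn k n Q * yAn k n := by
  obtain ⟨f, rfl⟩ := surj_piAn k n r
  obtain ⟨P, Q, h, hP, hQ, hf⟩ := exists_rep n hn f
  refine ⟨P, Q, hP, hQ, ?_⟩
  rw [hf, map_add, map_add, map_mul, map_mul, piAn_FF, mul_zero, zero_add, yAn_eq]

lemma key_R (hn : 0 < n) {A B : MvPowerSeries (Fin 2) k} (hA : Xonly A) (hB : Xonly B)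
    (h : piAn k n A + piAn k n B * yAn k n = 0) : A = 0 ∧ B = 0 := by
  have hmem : A + B * MvPowerSeries.X 1 ∈ Ideal.span
      {(MvPowerSeries.X 1 : MvPowerSeries (Fin 2) k) ^ 2 + MvPowerSeries.X 0 ^ n} := by
    rw [← Ideal.Quotient.eq_zero_iff_mem]
    rw [← h]
    rw [yAn_eq]
    push_cast [map_add, map_mul]
    rfl
  obtain ⟨c, hc⟩ := Ideal.mem_span_singleton'.mp hmem
  refine key_div n hn hA hB (h := c) ?_
  rw [← hc, FF, mul_comm]

/-- Main structural lemma: a relation `y·α = xʲ·β` forces the displayed shape. -/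
lemma sol (hn : 0 < n) (j : ℕ) (hjn : j ≤ n) {α β : An1 k n}
    (h : yAn k n * α = xAn k n ^ j * β) :
    ∃ qa qb : An1 k n,
      α = xAn k n ^ j * qb + qa * yAn k n ∧
      β = -(xAn k n ^ (n - j) * qa) + qb * yAn k n := by
  obtain ⟨Pa, Qa, hPa, hQa, ha⟩ := rep_R k n hn α
  obtain ⟨Pb, Qb, hPb, hQb, hb⟩ := rep_R k n hn β
  set A : MvPowerSeries (Fin 2) k :=
    (-(MvPowerSeries.X 0 ^ n * Qa)) - MvPowerSeries.X 0 ^ j * Pb with hA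
  set B : MvPowerSeries (Fin 2) k := Pa - MvPowerSeries.X 0 ^ j * Qb with hB
  have hXA : Xonly A := (((Xonly_X0_pow n).mul hQa).neg).sub ((Xonly_X0_pow j).mul hPb)
  have hXB : Xonly B := hPa.sub ((Xonly_X0_pow j).mul hQb)
  have hrel : piAn k n A + piAn k n B * yAn k n = 0 := by
    have hy2 := yAn_sq k n
    have hx : ∀ m : ℕ, piAn k n (MvPowerSeries.X 0 ^ m) = xAn k n ^ m := by
      intro m; rw [map_pow, xAn_eq]
    rw [hA, hB, map_sub, map_neg, map_mul, map_mul, map_sub, map_mul, hx, hx]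
    rw [ha, hb] at h
    linear_combination h - piAn k n Qa * hy2
  obtain ⟨hA0, hB0⟩ := key_R k n hn hXA hXB hrel
  have hXne : (MvPowerSeries.X 0 : MvPowerSeries (Fin 2) k) ^ j ≠ 0 := by
    apply pow_ne_zero
    intro hx
    have := congrArg (MvPowerSeries.coeff (Finsupp.single 0 1)) hx
    rw [show (MvPowerSeries.X 0 : MvPowerSeries (Fin 2) k)
        = MvPowerSeries.monomial (Finsupp.single 0 1) 1 from by
          rw [← MvPowerSeries.X_pow_eq, pow_one],
      MvPowerSeries.coeff_monomial_same, map_zero] at this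
    exact one_ne_zero this
  have hPb' : Pb = -(MvPowerSeries.X 0 ^ (n - j) * Qa) := by
    apply mul_left_cancel₀ hXne
    have hxn : (MvPowerSeries.X 0 : MvPowerSeries (Fin 2) k) ^ n
        = MvPowerSeries.X 0 ^ j * MvPowerSeries.X 0 ^ (n - j) := by
      rw [← pow_add, Nat.add_sub_cancel' hjn]
    have : MvPowerSeries.X 0 ^ j * Pb = -(MvPowerSeries.X 0 ^ n * Qa) := by
      linear_combination -hA0
    rw [this, hxn]
    ring
  have hPa' : Pa = MvPowerSeries.X 0 ^ j * Qb := by linear_combination hB0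
  refine ⟨piAn k n Qa, piAn k n Qb, ?_, ?_⟩
  · rw [ha, hPa', map_mul, map_pow, ← xAn_eq]
  · rw [hb, hPb', map_neg, map_mul, map_pow, ← xAn_eq]

end Ring

end MFAn

set_option maxHeartbeats 2000000 in
/-- Let `k` be a field, `n` an odd positive integer,
`R = k⟦x,y⟧/(y² + xⁿ)`, and `1 ≤ j ≤ (n-1)/2`.  Let `φⱼ = !![0, -x^(n-j); x^j, 0]`.
Then `φⱼ² = -xⁿ • id₂`, the cokernel of `y·id₂ - φⱼ` is isomorphic to the ideal `(x^j, y)`,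
and the trace ideal of `(x^j, y)` equals `(x^j, y)`. -/
theorem matrix_factorization_An_one_dim
    (k : Type*) [Field k] (n : ℕ) (hodd : Odd n) (hpos : 0 < n)
    (j : ℕ) (hj1 : 1 ≤ j) (hj2 : j ≤ (n - 1) / 2) :
    (!![0, -(xAn k n) ^ (n - j); (xAn k n) ^ j, 0] * !![0, -(xAn k n) ^ (n - j); (xAn k n) ^ j, 0]
        = -((xAn k n) ^ n • (1 : Matrix (Fin 2) (Fin 2) (An1 k n)))) ∧
      Nonempty
        (((Fin 2 → An1 k n) ⧸ LinearMap.range (Matrix.mulVecLin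
            (yAn k n • (1 : Matrix (Fin 2) (Fin 2) (An1 k n))
              - !![0, -(xAn k n) ^ (n - j); (xAn k n) ^ j, 0])))
          ≃ₗ[An1 k n] (Ideal.span {(xAn k n) ^ j, yAn k n} : Ideal (An1 k n))) ∧
      traceIdeal (An1 k n) (Ideal.span {(xAn k n) ^ j, yAn k n} : Ideal (An1 k n))
        = Ideal.span {(xAn k n) ^ j, yAn k n} := by
  classical
  obtain ⟨m, hm⟩ := hodd
  have hjlt : j + j < n := by omega
  have hjn : j ≤ n := by omega
  have hy2 : yAn k n ^ 2 = -(xAn k n ^ n) := MFAn.yAn_sq k n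
  have hab : xAn k n ^ (n - j) * xAn k n ^ j = xAn k n ^ n := by
    rw [← pow_add]
    congr 1
    omega
  have hxmem : xAn k n ^ j ∈ Ideal.span {xAn k n ^ j, yAn k n} :=
    Ideal.subset_span (Set.mem_insert _ _)
  have hymem : yAn k n ∈ Ideal.span {xAn k n ^ j, yAn k n} :=
    Ideal.subset_span (Set.mem_insert_of_mem _ rfl)
  refine ⟨?_, ?_, ?_⟩
  · ext i l
    fin_cases i <;> fin_cases l <;>
      simp [Matrix.mul_apply, Fin.sum_univ_two, Matrix.one_apply] <;>
      linear_combination -hab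
  · -- Part 2
    have hmat : yAn k n • (1 : Matrix (Fin 2) (Fin 2) (An1 k n))
          - !![0, -(xAn k n) ^ (n - j); (xAn k n) ^ j, 0]
        = !![yAn k n, xAn k n ^ (n - j); -(xAn k n ^ j), yAn k n] := by
      ext i l
      fin_cases i <;> fin_cases l <;> simp [Matrix.one_apply]
    have hgapp : ∀ u : Fin 2 → An1 k n,
        (xAn k n ^ j • (LinearMap.proj 0 : (Fin 2 → An1 k n) →ₗ[An1 k n] An1 k n)
            + yAn k n • (LinearMap.proj 1 : (Fin 2 → An1 k n) →ₗ[An1 k n] An1 k n)) u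
          = xAn k n ^ j * u 0 + yAn k n * u 1 := by
      intro u
      simp [LinearMap.proj_apply, smul_eq_mul]
    have hrange : LinearMap.range
          (xAn k n ^ j • (LinearMap.proj 0 : (Fin 2 → An1 k n) →ₗ[An1 k n] An1 k n)
            + yAn k n • (LinearMap.proj 1 : (Fin 2 → An1 k n) →ₗ[An1 k n] An1 k n))
        = (Ideal.span {xAn k n ^ j, yAn k n} : Ideal (An1 k n)) := by
      apply le_antisymm
      · rintro r ⟨u, rfl⟩
        rw [hgapp]
        exact Ideal.mem_span_pair.mpr ⟨u 0, u 1, by ring⟩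
      · intro r hr
        rw [Ideal.mem_span_pair] at hr
        obtain ⟨c, d, rfl⟩ := hr
        refine ⟨![c, d], ?_⟩
        rw [hgapp]
        simp
        ring
    have hker : LinearMap.range (Matrix.mulVecLin
          !![yAn k n, xAn k n ^ (n - j); -(xAn k n ^ j), yAn k n])
        = LinearMap.ker
          (xAn k n ^ j • (LinearMap.proj 0 : (Fin 2 → An1 k n) →ₗ[An1 k n] An1 k n)
            + yAn k n • (LinearMap.proj 1 : (Fin 2 → An1 k n) →ₗ[An1 k n] An1 k n)) := by
      apply le_antisymm
      · rintro u ⟨v, rfl⟩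
        rw [LinearMap.mem_ker, Matrix.mulVecLin_apply, hgapp]
        simp [Matrix.mulVec, dotProduct, Fin.sum_univ_two]
        linear_combination v 1 * hab + v 1 * hy2
      · intro u hu
        rw [LinearMap.mem_ker, hgapp] at hu
        have hrel : yAn k n * u 1 = xAn k n ^ j * (-(u 0)) := by linear_combination hu
        obtain ⟨qa, qb, h1, h2⟩ := MFAn.sol k n hpos j hjn hrel
        refine ⟨![-qb, qa], ?_⟩
        rw [Matrix.mulVecLin_apply]
        funext i
        fin_cases i <;>
          simp [Matrix.mulVec, dotProduct, Fin.sum_univ_two]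
        · linear_combination h2
        · linear_combination -h1
    exact ⟨(Submodule.quotEquivOfEq _ _ (by rw [hmat]; exact hker)).trans
      ((LinearMap.quotKerEquivRange _).trans (LinearEquiv.ofEq _ _ hrange))⟩
  · -- Part 3
    apply le_antisymm
    · refine iSup_le ?_
      intro f
      rintro r ⟨z, rfl⟩
      have hrel : yAn k n • (⟨xAn k n ^ j, hxmem⟩ :
            (Ideal.span {xAn k n ^ j, yAn k n} : Ideal (An1 k n)))
          = xAn k n ^ j • (⟨yAn k n, hymem⟩ :
            (Ideal.span {xAn k n ^ j, yAn k n} : Ideal (An1 k n))) := Subtype.ext (by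
        simp only [SetLike.val_smul, smul_eq_mul]
        ring)
      have hfy : yAn k n * f ⟨xAn k n ^ j, hxmem⟩ = xAn k n ^ j * f ⟨yAn k n, hymem⟩ := by
        rw [← smul_eq_mul, ← smul_eq_mul, ← map_smul, ← map_smul, hrel]
      obtain ⟨qa, qb, hα, hβ⟩ := MFAn.sol k n hpos j hjn hfy
      have hfX : f ⟨xAn k n ^ j, hxmem⟩ ∈ Ideal.span {xAn k n ^ j, yAn k n} :=
        Ideal.mem_span_pair.mpr ⟨qb, qa, by rw [hα]; ring⟩
      have hfY : f ⟨yAn k n, hymem⟩ ∈ Ideal.span {xAn k n ^ j, yAn k n} :=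
        Ideal.mem_span_pair.mpr ⟨-(xAn k n ^ (n - j - j) * qa), qb, by
          have hpow : xAn k n ^ (n - j - j) * xAn k n ^ j = xAn k n ^ (n - j) := by
            rw [← pow_add]
            congr 1
            omega
          rw [hβ]
          linear_combination (-qa) * hpow⟩
      obtain ⟨c, d, hz⟩ := Ideal.mem_span_pair.mp z.2
      have hzz : z = c • ⟨xAn k n ^ j, hxmem⟩ + d • ⟨yAn k n, hymem⟩ := Subtype.ext (by
        simp only [Submodule.coe_add, SetLike.val_smul, smul_eq_mul]
        exact hz.symm)
      rw [hzz, map_add, map_smul, map_smul]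
      exact Ideal.add_mem _ (Ideal.mul_mem_left _ c hfX) (Ideal.mul_mem_left _ d hfY)
    · have h1 : (Ideal.span {xAn k n ^ j, yAn k n} : Ideal (An1 k n)) =
          LinearMap.range (Ideal.span {xAn k n ^ j, yAn k n} : Ideal (An1 k n)).subtype :=
        (Submodule.range_subtype _).symm
      conv_lhs => rw [h1]
      exact le_iSup
        (fun f : (Ideal.span {xAn k n ^ j, yAn k n} : Ideal (An1 k n)) →ₗ[An1 k n] An1 k n =>
          LinearMap.range f)
        (Ideal.span {xAn k n ^ j, yAn k n} : Ideal (An1 k n)).subtype
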